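/- arXiv:2112.09592 — 15 statements merged into one kernel-verified Lean document; each statement's English description precedes it below -/
import Mathlib

section
/- In ℤ³ equipped with the symmetric bilinear form B(u,w) = u₁w₃ + u₃w₁ + 6u₂w₂, the orthogonal complement of the vector v = (−1,−1,4) equals the ℤ-span of w₁ = (1,1,−2) and w₂ = (0,1,−6), and the Gram matrix of (w₁,w₂) is [[2,0],[0,6]]. (This computes the transcendental lattice of the singular K3 surface X₋₃₆ of Verrill's family: T(X₋₃₆) = [2 0 6].) -/
/-! Since `B(v, w) = 4 w₀ - 6 w₁ - w₂`, the complement `v^⊥` is the graph `w₂ = 4 w₀ - 6 w₁`.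
Every `w` on it is the integral combination `w = w₀ • w₁ + (w₁ - w₀) • w₂`, and conversely
`w₁` and `w₂` lie on it, so they form a basis of `v^⊥`. -/

lemma mem_span_pair_iff_third_coord (w : Fin 3 → ℤ) :
    w ∈ Submodule.span ℤ {![1, 1, -2], ![0, 1, -6]} ↔ w 2 = 4 * w 0 - 6 * w 1 := by
  rw [Submodule.mem_span_pair]
  constructor
  · rintro ⟨a, b, rfl⟩
    simp only [Pi.add_apply, Pi.smul_apply, smul_eq_mul, Matrix.cons_val_zero,
      Matrix.cons_val_one, Matrix.cons_val]
    ring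
  · intro h
    refine ⟨w 0, w 1 - w 0, funext fun i => ?_⟩
    fin_cases i <;> simp; omega

theorem stmt_0 :
    let B : (Fin 3 → ℤ) → (Fin 3 → ℤ) → ℤ :=
      fun u w => u 0 * w 2 + u 2 * w 0 + 6 * (u 1 * w 1)
    let v : Fin 3 → ℤ := ![-1, -1, 4]
    let w₁ : Fin 3 → ℤ := ![1, 1, -2]
    let w₂ : Fin 3 → ℤ := ![0, 1, -6]
    {w : Fin 3 → ℤ | B v w = 0} = (Submodule.span ℤ {w₁, w₂} : Set (Fin 3 → ℤ)) ∧
      B w₁ w₁ = 2 ∧ B w₁ w₂ = 0 ∧ B w₂ w₁ = 0 ∧ B w₂ w₂ = 6 := by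
  intro B v w₁ w₂
  refine ⟨?_, rfl, rfl, rfl, rfl⟩
  ext w
  rw [Set.mem_ofPred_eq, SetLike.mem_coe, mem_span_pair_iff_third_coord]
  simp only [B, v, Matrix.cons_val_zero, Matrix.cons_val_one, Matrix.cons_val]
  omega
end

section
/- In ℤ³ equipped with the symmetric bilinear form B(u,w) = u₁w₃ + u₃w₁ + 6u₂w₂, the orthogonal complement of the vector v = (−2,0,1) equals the ℤ-span of w₁ = (2,0,1) and w₂ = (0,1,0), and the Gram matrix of (w₁,w₂) is [[4,0],[0,6]]. (This computes the transcendental lattice of the singular K3 surface X₋₁₂ of Verrill's family: T(X₋₁₂) = [4 0 6].) -/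
theorem mem_span_vec3_pair_iff {R : Type*} [CommRing R] (a : R) (w : Fin 3 → R) :
    w ∈ Submodule.span R {![a, 0, 1], ![0, 1, 0]} ↔ w 0 = a * w 2 := by
  rw [Submodule.mem_span_pair]
  constructor
  · rintro ⟨c, d, rfl⟩
    simp [mul_comm]
  · intro h
    refine ⟨w 2, w 1, ?_⟩
    ext i
    fin_cases i <;> simp [h, mul_comm]

theorem stmt_1 :
    let B : (Fin 3 → ℤ) → (Fin 3 → ℤ) → ℤ :=
      fun u w => u 0 * w 2 + u 2 * w 0 + 6 * (u 1 * w 1)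
    let v : Fin 3 → ℤ := ![-2, 0, 1]
    let w₁ : Fin 3 → ℤ := ![2, 0, 1]
    let w₂ : Fin 3 → ℤ := ![0, 1, 0]
    {w : Fin 3 → ℤ | B v w = 0} = (Submodule.span ℤ {w₁, w₂} : Set (Fin 3 → ℤ)) ∧
      B w₁ w₁ = 4 ∧ B w₁ w₂ = 0 ∧ B w₂ w₁ = 0 ∧ B w₂ w₂ = 6 := by
  intro B v w₁ w₂
  refine ⟨?_, by decide, by decide, by decide, by decide⟩
  ext w
  have orthogonal_iff : B v w = 0 ↔ w 0 = 2 * w 2 := by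
    simp only [B, v, Matrix.cons_val_zero, Matrix.cons_val_one, Matrix.cons_val, neg_mul, one_mul,
      zero_mul, mul_zero, add_zero]
    omega
  simpa only [Set.mem_ofPred_eq, SetLike.mem_coe, orthogonal_iff] using
    (mem_span_vec3_pair_iff (2 : ℤ) w).symm
end

section
/- In ℤ³ equipped with the symmetric bilinear form B(u,w) = u₁w₃ + u₃w₁ + 6u₂w₂, the orthogonal complement of the vector v = (−4,0,1) equals the ℤ-span of w₁ = (0,1,0) and w₂ = (4,0,1), and the Gram matrix of (w₁,w₂) is [[6,0],[0,8]]. (This computes the transcendental lattice of the singular K3 surface X₋₆ of Verrill's family: T(X₋₆) = [6 0 8].) -/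
theorem mem_span_pair_iff_eq_mul {R : Type*} [CommRing R] (a : R) (w : Fin 3 → R) :
    w ∈ Submodule.span R {![0, 1, 0], ![a, 0, 1]} ↔ w 0 = a * w 2 := by
  rw [Submodule.mem_span_pair]
  constructor
  · rintro ⟨c, d, rfl⟩
    simp [mul_comm]
  · intro h
    refine ⟨w 1, w 2, funext fun i => ?_⟩
    fin_cases i <;> simp [h, mul_comm]

theorem stmt_2 :
    let B : (Fin 3 → ℤ) → (Fin 3 → ℤ) → ℤ :=
      fun u w => u 0 * w 2 + u 2 * w 0 + 6 * (u 1 * w 1)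
    let v : Fin 3 → ℤ := ![-4, 0, 1]
    let w₁ : Fin 3 → ℤ := ![0, 1, 0]
    let w₂ : Fin 3 → ℤ := ![4, 0, 1]
    {w : Fin 3 → ℤ | B v w = 0} = (Submodule.span ℤ {w₁, w₂} : Set (Fin 3 → ℤ)) ∧
      B w₁ w₁ = 6 ∧ B w₁ w₂ = 0 ∧ B w₂ w₁ = 0 ∧ B w₂ w₂ = 8 := by
  intro B v w₁ w₂
  refine ⟨?_, rfl, rfl, rfl, rfl⟩
  ext w
  -- `B v w = w 0 - 4 * w 2`, so `v^⊥` is cut out by `w 0 = 4 * w 2`.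
  simp only [Set.mem_ofPred_eq, SetLike.mem_coe, w₁, w₂, mem_span_pair_iff_eq_mul, B, v,
    Matrix.cons_val]
  omega
end

section
/- In ℤ³ equipped with the symmetric bilinear form B(u,w) = u₁w₃ + u₃w₁ + 6u₂w₂, the orthogonal complement of the vector v = (−8,−1,1) equals the ℤ-span of w₁ = (6,1,0) and w₂ = (2,−1,1), and the Gram matrix of (w₁,w₂) is [[6,0],[0,10]]. (This computes the transcendental lattice of the singular K3 surface X₋₃ of Verrill's family: T(X₋₃) = [6 0 10].) -/
/-!
Solving `B v w = w 0 - 6 * w 1 - 8 * w 2 = 0` for `w 0` exhibits `v^⊥` as the span of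
`(6, 1, 0)` and `(8, 0, 1)`; replacing the second vector by its difference with the first,
`(2, -1, 1)`, does not change the span.
-/

theorem Submodule.span_pair_sub_left {R M : Type*} [Ring R] [AddCommGroup M] [Module R M]
    (x y : M) : span R {x, y - x} = span R {x, y} := by
  ext z
  simp only [mem_span_pair]
  constructor
  · rintro ⟨a, b, rfl⟩
    exact ⟨a - b, b, by rw [smul_sub, sub_smul]; abel⟩
  · rintro ⟨a, b, rfl⟩
    exact ⟨a + b, b, by rw [smul_sub, add_smul]; abel⟩

theorem setOf_add_mul_add_mul_eq_zero {R : Type*} [CommRing R] (p q : R) :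
    {w : Fin 3 → R | w 0 + p * w 1 + q * w 2 = 0} =
      (Submodule.span R {![-p, 1, 0], ![-q, 0, 1]} : Set (Fin 3 → R)) := by
  ext w
  simp only [Set.mem_ofPred_eq, SetLike.mem_coe, Submodule.mem_span_pair]
  constructor
  · intro hw
    have hw₀ : w 0 = -p * w 1 - q * w 2 := by linear_combination hw
    refine ⟨w 1, w 2, funext fun i => ?_⟩
    fin_cases i <;> simp [hw₀, sub_eq_add_neg, mul_comm]
  · rintro ⟨a, b, rfl⟩
    simp only [Matrix.smul_cons, smul_eq_mul, Matrix.smul_empty, Pi.add_apply,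
      Matrix.cons_val_zero, Matrix.cons_val_one, Matrix.cons_val]
    ring

theorem stmt_3 :
    let B : (Fin 3 → ℤ) → (Fin 3 → ℤ) → ℤ :=
      fun u w => u 0 * w 2 + u 2 * w 0 + 6 * (u 1 * w 1)
    let v : Fin 3 → ℤ := ![-8, -1, 1]
    let w₁ : Fin 3 → ℤ := ![6, 1, 0]
    let w₂ : Fin 3 → ℤ := ![2, -1, 1]
    {w : Fin 3 → ℤ | B v w = 0} = (Submodule.span ℤ {w₁, w₂} : Set (Fin 3 → ℤ)) ∧
      B w₁ w₁ = 6 ∧ B w₁ w₂ = 0 ∧ B w₂ w₁ = 0 ∧ B w₂ w₂ = 10 := by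
  intro B v w₁ w₂
  refine ⟨?_, by decide, by decide, by decide, by decide⟩
  have hB : ∀ w, B v w = w 0 + (-6) * w 1 + (-8) * w 2 := fun w => by
    simp only [B, v, Matrix.cons_val_zero, Matrix.cons_val_one, Matrix.cons_val]
    ring
  have hw₂ : w₂ = ![8, 0, 1] - w₁ := by decide
  simp only [hB, setOf_add_mul_add_mul_eq_zero, hw₂, Submodule.span_pair_sub_left]
  norm_num [w₁]
end

section
/- In ℤ³ equipped with the symmetric bilinear form B(u,w) = u₁w₃ + u₃w₁ + 6u₂w₂, the orthogonal complement of the vector v = (−4,−1,1) equals the ℤ-span of w₁ = (−2,−1,1) and w₂ = (6,1,0), and the Gram matrix of (w₁,w₂) is [[2,0],[0,6]]. (This computes the transcendental lattice of the singular K3 surface X₀ of Verrill's family: T(X₀) = [2 0 6].) -/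
/-!
Since `B(v, w) = w₀ - 6 w₁ - 4 w₂`, a vector `w` is orthogonal to `v = (-4, -1, 1)` exactly when
`w₀ = 6 w₁ + 4 w₂`, and such a `w` decomposes as `w = w₂ • (-2, -1, 1) + (w₁ + w₂) • (6, 1, 0)`.
-/

theorem Submodule.eq_span_pair_of_forall_mem {R M : Type*} [CommSemiring R] [AddCommMonoid M]
    [Module R M] {p : Submodule R M} {x y : M} (hx : x ∈ p) (hy : y ∈ p) (c d : M → R)
    (hdecomp : ∀ w ∈ p, c w • x + d w • y = w) : p = span R {x, y} := by
  refine le_antisymm (fun w hw => mem_span_pair.mpr ⟨c w, d w, hdecomp w hw⟩) ?_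
  exact span_le.mpr (Set.insert_subset hx (Set.singleton_subset_iff.mpr hy))

def verrillGram : Matrix (Fin 3) (Fin 3) ℤ := !![0, 0, 1; 0, 6, 0; 1, 0, 0]

abbrev verrillForm : LinearMap.BilinForm ℤ (Fin 3 → ℤ) := Matrix.toLinearMap₂' ℤ verrillGram

theorem verrillForm_apply (u w : Fin 3 → ℤ) :
    verrillForm u w = u 0 * w 2 + u 2 * w 0 + 6 * (u 1 * w 1) := by
  simp only [Matrix.toLinearMap₂'_apply', verrillGram, dotProduct, Matrix.mulVec,
    Fin.sum_univ_three, Matrix.of_apply, Matrix.cons_val]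
  ring

theorem ker_verrillForm_eq_span :
    LinearMap.ker (verrillForm ![-4, -1, 1]) = Submodule.span ℤ {![-2, -1, 1], ![6, 1, 0]} := by
  refine Submodule.eq_span_pair_of_forall_mem ?_ ?_ (fun w => w 2) (fun w => w 1 + w 2) ?_
  · simp [verrillForm_apply]
  · simp [verrillForm_apply]
  · intro w hw
    have hw₀ : w 0 = 6 * w 1 + 4 * w 2 := by
      rw [LinearMap.mem_ker, verrillForm_apply] at hw
      simp only [Matrix.cons_val] at hw
      linarith
    ext i
    fin_cases i <;>
      simp only [Fin.reduceFinMk, Fin.zero_eta, Fin.mk_one, Pi.add_apply, Pi.smul_apply,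
        smul_eq_mul, Matrix.cons_val] <;>
      linarith

theorem stmt_4 :
    let B : (Fin 3 → ℤ) → (Fin 3 → ℤ) → ℤ :=
      fun u w => u 0 * w 2 + u 2 * w 0 + 6 * (u 1 * w 1)
    let v : Fin 3 → ℤ := ![-4, -1, 1]
    let w₁ : Fin 3 → ℤ := ![-2, -1, 1]
    let w₂ : Fin 3 → ℤ := ![6, 1, 0]
    {w : Fin 3 → ℤ | B v w = 0} = (Submodule.span ℤ {w₁, w₂} : Set (Fin 3 → ℤ)) ∧
      B w₁ w₁ = 2 ∧ B w₁ w₂ = 0 ∧ B w₂ w₁ = 0 ∧ B w₂ w₂ = 6 := by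
  intro B v w₁ w₂
  refine ⟨?_, rfl, rfl, rfl, rfl⟩
  rw [← ker_verrillForm_eq_span]
  ext w
  simp [B, v, verrillForm_apply]
end

section
/- In ℤ³ equipped with the symmetric bilinear form B(u,w) = u₁w₃ + u₃w₁ + 6u₂w₂, the orthogonal complement of the vector v = (−2,−1,2) equals the ℤ-span of w₁ = (1,0,1) and w₂ = (2,1,−1), and the Gram matrix of (w₁,w₂) is [[2,1],[1,2]]. (This computes the transcendental lattice of the singular K3 surface X₁₂ of Verrill's family: T(X₁₂) = [2 1 2].) -/
/-!
Since `B(v, w) = 2 (w₀ - 3 w₁ - w₂)`, the complement `v^⊥` is the plane `w₀ = w₂ + 3 w₁`,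
and every `w` on that plane is `(w₂ + w₁) • w₁ + w₁ • w₂`.
-/

theorem mem_span_pair_iff_coord_eq {R : Type*} [CommRing R] (w : Fin 3 → R) :
    w ∈ Submodule.span R {![1, 0, 1], ![2, 1, -1]} ↔ w 0 = w 2 + 3 * w 1 := by
  rw [Submodule.mem_span_pair]
  constructor
  · rintro ⟨c, d, rfl⟩
    simp only [Pi.add_apply, Pi.smul_apply, smul_eq_mul, Matrix.cons_val_zero,
      Matrix.cons_val_one, Matrix.cons_val_two, Matrix.head_cons, Matrix.tail_cons]
    ring
  · intro h
    refine ⟨w 2 + w 1, w 1, ?_⟩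
    ext i
    fin_cases i <;> simp [h]; ring

theorem stmt_6 :
    let B : (Fin 3 → ℤ) → (Fin 3 → ℤ) → ℤ :=
      fun u w => u 0 * w 2 + u 2 * w 0 + 6 * (u 1 * w 1)
    let v : Fin 3 → ℤ := ![-2, -1, 2]
    let w₁ : Fin 3 → ℤ := ![1, 0, 1]
    let w₂ : Fin 3 → ℤ := ![2, 1, -1]
    {w : Fin 3 → ℤ | B v w = 0} = (Submodule.span ℤ {w₁, w₂} : Set (Fin 3 → ℤ)) ∧
      B w₁ w₁ = 2 ∧ B w₁ w₂ = 1 ∧ B w₂ w₁ = 1 ∧ B w₂ w₂ = 2 := by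
  intro B v w₁ w₂
  refine ⟨?_, by simp [B, w₁, w₂]⟩
  ext w
  have hBv : B v w = 2 * (w 0 - 3 * w 1 - w 2) := by
    simp only [B, v, Matrix.cons_val_zero, Matrix.cons_val_one, Matrix.cons_val]
    ring
  rw [Set.mem_ofPred_eq, SetLike.mem_coe, mem_span_pair_iff_coord_eq, hBv]
  omega
end

section
/- In ℤ³ equipped with the symmetric bilinear form B(u,w) = u₁w₃ + u₃w₁ + 6u₂w₂, the orthogonal complement of the vector v = (−2,−1,4) equals the ℤ-span of w₁ = (1,0,2) and w₂ = (1,1,−1), and the Gram matrix of (w₁,w₂) is [[4,1],[1,4]]. (This computes the transcendental lattice of the singular K3 surface X₆₀ of Verrill's family: T(X₆₀) = [4 1 4].) -/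
theorem exists_smul_add_smul_eq_iff {R : Type*} [CommRing R] (w : Fin 3 → R) :
    (∃ a b : R, a • ![1, 0, 2] + b • ![1, 1, -1] = w) ↔ w 2 = 2 * w 0 - 3 * w 1 := by
  constructor
  · rintro ⟨a, b, rfl⟩
    simp only [Matrix.smul_cons, smul_eq_mul, mul_one, mul_zero, Matrix.smul_empty, mul_neg,
      Pi.add_apply, Matrix.cons_val, Matrix.cons_val_zero, Matrix.cons_val_one, zero_add]
    ring
  · intro h
    refine ⟨w 0 - w 1, w 1, ?_⟩
    ext i
    fin_cases i <;> simp [h]; ring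

theorem stmt_7 :
    let B : (Fin 3 → ℤ) → (Fin 3 → ℤ) → ℤ :=
      fun u w => u 0 * w 2 + u 2 * w 0 + 6 * (u 1 * w 1)
    let v : Fin 3 → ℤ := ![-2, -1, 4]
    let w₁ : Fin 3 → ℤ := ![1, 0, 2]
    let w₂ : Fin 3 → ℤ := ![1, 1, -1]
    {w : Fin 3 → ℤ | B v w = 0} = (Submodule.span ℤ {w₁, w₂} : Set (Fin 3 → ℤ)) ∧
      B w₁ w₁ = 4 ∧ B w₁ w₂ = 1 ∧ B w₂ w₁ = 1 ∧ B w₂ w₂ = 4 := by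
  intro B v w₁ w₂
  refine ⟨?_, by decide, by decide, by decide, by decide⟩
  ext w
  rw [Set.mem_ofPred_eq, SetLike.mem_coe, Submodule.mem_span_pair, exists_smul_add_smul_eq_iff]
  -- `B v w = 4 w₀ - 6 w₁ - 2 w₂`, and halving is exact over `ℤ`.
  simp only [B, v, Matrix.cons_val, Matrix.cons_val_zero, Matrix.cons_val_one, neg_mul, one_mul]
  omega
end

section
/- In ℤ³ equipped with the symmetric bilinear form B(u,w) = u₁w₃ + u₃w₁ + 12u₂w₂, the orthogonal complement of the vector v = (−6,1,6) equals the ℤ-span of w₁ = (1,0,1) and w₂ = (−1,1,1), and the Gram matrix of (w₁,w₂) is [[2,0],[0,10]]. (This computes the transcendental lattice of the singular K3 surface Y_{2√5} of the Apéry–Fermi family: T(Y_{2√5}) = [2 0 10].) -/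
lemma mem_span_pair_iff_coord_two_eq {R : Type*} [CommRing R] (w : Fin 3 → R) :
    w ∈ Submodule.span R {![1, 0, 1], ![-1, 1, 1]} ↔ w 2 = w 0 + 2 * w 1 := by
  rw [Submodule.mem_span_pair]
  constructor
  · rintro ⟨a, b, rfl⟩
    simp only [Pi.add_apply, Pi.smul_apply, Matrix.cons_val, smul_eq_mul]
    ring
  · intro h
    refine ⟨w 0 + w 1, w 1, ?_⟩
    ext i
    fin_cases i <;> simp [h]
    ring

theorem stmt_8 :
    let B : (Fin 3 → ℤ) → (Fin 3 → ℤ) → ℤ :=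
      fun u w => u 0 * w 2 + u 2 * w 0 + 12 * (u 1 * w 1)
    let v : Fin 3 → ℤ := ![-6, 1, 6]
    let w₁ : Fin 3 → ℤ := ![1, 0, 1]
    let w₂ : Fin 3 → ℤ := ![-1, 1, 1]
    {w : Fin 3 → ℤ | B v w = 0} = (Submodule.span ℤ {w₁, w₂} : Set (Fin 3 → ℤ)) ∧
      B w₁ w₁ = 2 ∧ B w₁ w₂ = 0 ∧ B w₂ w₁ = 0 ∧ B w₂ w₂ = 10 := by
  intro B v w₁ w₂
  have hBv : ∀ w, B v w = 6 * (w 0 + 2 * w 1 - w 2) := fun w => by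
    simp only [B, v, Matrix.cons_val]
    ring
  refine ⟨?_, rfl, rfl, rfl, rfl⟩
  ext w
  simp only [Set.mem_ofPred_eq, SetLike.mem_coe, hBv, w₁, w₂, mem_span_pair_iff_coord_two_eq]
  omega
end

section
/- In ℤ³ equipped with the symmetric bilinear form B(u,w) = u₁w₃ + u₃w₁ + 12u₂w₂, the orthogonal complement of the vector v = (−2,1,6) equals the ℤ-span of w₁ = (1,0,3) and w₂ = (−1,1,3), and the Gram matrix of (w₁,w₂) is [[6,0],[0,6]]. (This computes the transcendental lattice of the singular K3 surface Y_{2√−3} of the Apéry–Fermi family: T(Y_{2√−3}) = [6 0 6].) -/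
/-!
Since `B(v, (x, y, z)) = 6x + 12y - 2z`, the complement `v^⊥` is the graph `z = 3x + 6y`,
and each of its points is `(x + y) • w₁ + y • w₂`.
-/

def aperyFermiForm (u w : Fin 3 → ℤ) : ℤ :=
  u 0 * w 2 + u 2 * w 0 + 12 * (u 1 * w 1)

lemma aperyFermiForm_eq_zero_iff (w : Fin 3 → ℤ) :
    aperyFermiForm ![-2, 1, 6] w = 0 ↔ w 2 = 3 * w 0 + 6 * w 1 := by
  simp only [aperyFermiForm, Matrix.cons_val_zero, Matrix.cons_val_one, Matrix.cons_val_two,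
    Matrix.head_cons, Matrix.tail_cons]
  omega

lemma mem_span_pair_iff_graph (a b : ℤ) (w : Fin 3 → ℤ) :
    w ∈ Submodule.span ℤ {![1, 0, a], ![-1, 1, b]} ↔ w 2 = a * w 0 + (a + b) * w 1 := by
  rw [Submodule.mem_span_pair]
  constructor
  · rintro ⟨c, d, rfl⟩
    simp only [Matrix.smul_vec3, Matrix.vec3_add, Matrix.cons_val_zero, Matrix.cons_val_one,
      Matrix.cons_val_two, Matrix.head_cons, Matrix.tail_cons, smul_eq_mul]
    ring
  · intro h
    refine ⟨w 0 + w 1, w 1, ?_⟩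
    ext i
    fin_cases i
    · simp
    · simp
    · simp [h]
      ring

theorem stmt_10 :
    let B : (Fin 3 → ℤ) → (Fin 3 → ℤ) → ℤ :=
      fun u w => u 0 * w 2 + u 2 * w 0 + 12 * (u 1 * w 1)
    let v : Fin 3 → ℤ := ![-2, 1, 6]
    let w₁ : Fin 3 → ℤ := ![1, 0, 3]
    let w₂ : Fin 3 → ℤ := ![-1, 1, 3]
    {w : Fin 3 → ℤ | B v w = 0} = (Submodule.span ℤ {w₁, w₂} : Set (Fin 3 → ℤ)) ∧
      B w₁ w₁ = 6 ∧ B w₁ w₂ = 0 ∧ B w₂ w₁ = 0 ∧ B w₂ w₂ = 6 := by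
  intro B v w₁ w₂
  refine ⟨?_, by decide, by decide, by decide, by decide⟩
  ext w
  exact (aperyFermiForm_eq_zero_iff w).trans (mem_span_pair_iff_graph 3 3 w).symm
end

section
/- In ℤ³ equipped with the symmetric bilinear form B(u,w) = u₁w₃ + u₃w₁ + 12u₂w₂, the orthogonal complement of the vector v = (−2,1,8) equals the ℤ-span of w₁ = (1,0,4) and w₂ = (1,−1,−2), and the Gram matrix of (w₁,w₂) is [[8,2],[2,8]]. (This computes the transcendental lattice of the singular K3 surface Y_{3√−5} of the Apéry–Fermi family: T(Y_{3√−5}) = [8 2 8].) -/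
/-!
For `w = (x, y, z)` the condition `B v w = 0` reads `z = 4x + 6y`, so `v^⊥` has the basis
`e = (1, 0, 4)`, `f = (0, 1, 6)`. Since `w₁ = e` and `w₂ = e - f`, the pair `(w₁, w₂)` is a
unimodular change of this basis: explicitly `w = (x + y) w₁ - y w₂`.
-/

lemma eq_smul_add_smul_of_apply_two_eq {w : Fin 3 → ℤ} (h : w 2 = 4 * w 0 + 6 * w 1) :
    (w 0 + w 1) • ![1, 0, 4] + (-w 1) • ![1, -1, -2] = w := by
  ext i
  fin_cases i <;> simp [h]
  ring

theorem stmt_11 :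
    let B : (Fin 3 → ℤ) → (Fin 3 → ℤ) → ℤ :=
      fun u w => u 0 * w 2 + u 2 * w 0 + 12 * (u 1 * w 1)
    let v : Fin 3 → ℤ := ![-2, 1, 8]
    let w₁ : Fin 3 → ℤ := ![1, 0, 4]
    let w₂ : Fin 3 → ℤ := ![1, -1, -2]
    {w : Fin 3 → ℤ | B v w = 0} = (Submodule.span ℤ {w₁, w₂} : Set (Fin 3 → ℤ)) ∧
      B w₁ w₁ = 8 ∧ B w₁ w₂ = 2 ∧ B w₂ w₁ = 2 ∧ B w₂ w₂ = 8 := by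
  intro B v w₁ w₂
  have orthogonal_iff (w : Fin 3 → ℤ) : B v w = 0 ↔ w 2 = 4 * w 0 + 6 * w 1 := by
    change -2 * w 2 + 8 * w 0 + 12 * (1 * w 1) = 0 ↔ _
    omega
  refine ⟨?_, by decide⟩
  ext w
  simp only [Set.mem_ofPred_eq, SetLike.mem_coe, Submodule.mem_span_pair, orthogonal_iff]
  constructor
  · intro h
    exact ⟨_, _, eq_smul_add_smul_of_apply_two_eq h⟩
  · rintro ⟨a, b, rfl⟩
    simp only [w₁, w₂, Matrix.smul_cons, Matrix.smul_empty, smul_eq_mul, Pi.add_apply,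
      Matrix.cons_val_zero, Matrix.cons_val_one, Matrix.cons_val]
    ring
end

section
/- Let F be a field of characteristic 0 and let k, t, X, Y ∈ F with X ≠ 0, Y ≠ 0 and k + 3 − t ≠ 0. If Y² + (t² − kt + 3)XY − (t+1)²(kt − (t−1)²)Y = X³, then setting x = (Y − X² + Yt)/(Y(k+3−t)), y = (Y + (t+1)X)/(X(k+3−t)) and z = t − x − y, one has Q_k(x,y,z) = 0, i.e. (x+y+z+1)(xy+xz+yz+xyz) − (k+4)xyz = 0. -/
/-!
On the plane `x + y + z = t` the polynomial `Q_k` becomes `(t+1)(xy+xz+yz) - (k+3-t)xyz`.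
Substituting the given `x` and `y` and clearing denominators, this is `-W(X,Y) / (Y (k+3-t)²)`,
where `W = 0` is the Weierstrass equation; so `Q_k` vanishes on the image of the curve.
-/

section K3Fibration

variable {F : Type*} [Field F]

def k3Poly (k x y z : F) : F :=
  (x + y + z + 1) * (x * y + x * z + y * z + x * y * z) - (k + 4) * (x * y * z)

def weierstrassPoly (k t X Y : F) : F :=
  Y ^ 2 + (t ^ 2 - k * t + 3) * X * Y - (t + 1) ^ 2 * (k * t - (t - 1) ^ 2) * Y - X ^ 3

theorem k3Poly_eq_of_add_add_eq {k x y z t : F} (h : x + y + z = t) :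
    k3Poly k x y z = (t + 1) * (x * y + x * z + y * z) - (k + 3 - t) * (x * y * z) := by
  rw [k3Poly, h]
  ring

theorem k3Poly_fibre_eq {k t X Y : F} (hX : X ≠ 0) (hY : Y ≠ 0) (hk : k + 3 - t ≠ 0) :
    let x := (Y - X ^ 2 + Y * t) / (Y * (k + 3 - t))
    let y := (Y + (t + 1) * X) / (X * (k + 3 - t))
    k3Poly k x y (t - x - y) = -weierstrassPoly k t X Y / (Y * (k + 3 - t) ^ 2) := by
  intro x y
  rw [k3Poly_eq_of_add_add_eq (t := t) (by ring), weierstrassPoly]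
  simp only [x, y]
  field_simp
  ring

end K3Fibration

theorem stmt_13_general (F : Type*) [Field F] (k t X Y : F)
    (hX : X ≠ 0) (hY : Y ≠ 0) (hk : k + 3 - t ≠ 0)
    (hW : Y ^ 2 + (t ^ 2 - k * t + 3) * X * Y - (t + 1) ^ 2 * (k * t - (t - 1) ^ 2) * Y
      = X ^ 3) :
    let x := (Y - X ^ 2 + Y * t) / (Y * (k + 3 - t))
    let y := (Y + (t + 1) * X) / (X * (k + 3 - t))
    let z := t - x - y
    (x + y + z + 1) * (x * y + x * z + y * z + x * y * z) - (k + 4) * (x * y * z) = 0 := by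
  have h := k3Poly_fibre_eq hX hY hk
  rwa [show weierstrassPoly k t X Y = 0 from sub_eq_zero.mpr hW, neg_zero, zero_div] at h

theorem stmt_13 (F : Type*) [Field F] [CharZero F] (k t X Y : F)
    (hX : X ≠ 0) (hY : Y ≠ 0) (hk : k + 3 - t ≠ 0)
    (hW : Y ^ 2 + (t ^ 2 - k * t + 3) * X * Y - (t + 1) ^ 2 * (k * t - (t - 1) ^ 2) * Y
      = X ^ 3) :
    let x := (Y - X ^ 2 + Y * t) / (Y * (k + 3 - t))
    let y := (Y + (t + 1) * X) / (X * (k + 3 - t))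
    let z := t - x - y
    (x + y + z + 1) * (x * y + x * z + y * z + x * y * z) - (k + 4) * (x * y * z) = 0 :=
  stmt_13_general F k t X Y hX hY hk hW
end

section
/- Let F be a field and let k, t, x, y ∈ F with (k+4)(t+k+3) ≠ 0. Suppose y² = x³ + ((k²−24)t² + 2(k−2)(k+4)²t + k(k+4)³)x² − 16t⁴(t+k+3)x. Then, setting m = x/(4(k+4)²(t+k+3)) and W = y/(4(t+k+3)(k+4)), one has W² = −4t⁴m + (k²−24)(k+4)²m²t² + (4m + 2(k−2))(k+4)⁴m²t + (4(k+3)m + k(k+4))(k+4)⁴m². (This change of variables exhibits the genus 1 fibration of Z_k, viewed over the base parameter m, whose Jacobian is the surface J_k.) -/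
/-! The substitution `x = 4(k+4)²(t+k+3)·m`, `y = 4(k+4)(t+k+3)·W` multiplies the cubic in `x` by
exactly `(4(k+4)(t+k+3))²` times the quartic in `m`, so the equation in `(x, y)` becomes the
equation in `(m, W)` after cancelling that square. -/

section
variable {F : Type*} [Field F]

def weierstrassCubic (k t x : F) : F :=
  x ^ 3 + ((k ^ 2 - 24) * t ^ 2 + 2 * (k - 2) * (k + 4) ^ 2 * t + k * (k + 4) ^ 3) * x ^ 2
    - 16 * t ^ 4 * (t + k + 3) * x

def genusOneQuartic (k t m : F) : F :=
  -4 * t ^ 4 * m + (k ^ 2 - 24) * (k + 4) ^ 2 * m ^ 2 * t ^ 2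
    + (4 * m + 2 * (k - 2)) * (k + 4) ^ 4 * m ^ 2 * t
    + (4 * (k + 3) * m + k * (k + 4)) * (k + 4) ^ 4 * m ^ 2

theorem weierstrassCubic_rescale (k t m : F) :
    weierstrassCubic k t (m * (4 * (k + 4) * (t + k + 3) * (k + 4)))
      = (4 * (k + 4) * (t + k + 3)) ^ 2 * genusOneQuartic k t m := by
  unfold weierstrassCubic genusOneQuartic
  ring

end

theorem stmt_14_general (F : Type*) [Field F] (k t x y : F)
    (hW : y ^ 2 = x ^ 3 + ((k ^ 2 - 24) * t ^ 2 + 2 * (k - 2) * (k + 4) ^ 2 * t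
      + k * (k + 4) ^ 3) * x ^ 2 - 16 * t ^ 4 * (t + k + 3) * x) :
    let m := x / (4 * (k + 4) ^ 2 * (t + k + 3))
    let W := y / (4 * (t + k + 3) * (k + 4))
    W ^ 2 = -4 * t ^ 4 * m + (k ^ 2 - 24) * (k + 4) ^ 2 * m ^ 2 * t ^ 2
      + (4 * m + 2 * (k - 2)) * (k + 4) ^ 4 * m ^ 2 * t
      + (4 * (k + 3) * m + k * (k + 4)) * (k + 4) ^ 4 * m ^ 2 := by
  intro m W
  change W ^ 2 = genusOneQuartic k t m
  set d := 4 * (k + 4) * (t + k + 3)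
  have hm : m = x / (d * (k + 4)) := by simp only [m, d]; ring
  have hW' : W = y / d := by simp only [W, d]; ring
  by_cases hd : d = 0
  · -- division by zero makes `m = W = 0`, and every term of the quartic has a factor `m`
    simp [hm, hW', hd, genusOneQuartic]
  have hk : k + 4 ≠ 0 := fun hk => hd (by simp [d, hk])
  have hx : x = m * (d * (k + 4)) := by rw [hm, div_mul_cancel₀ x (mul_ne_zero hd hk)]
  have hy : y = W * d := by rw [hW', div_mul_cancel₀ y hd]
  have hscaled : (W * d) ^ 2 = d ^ 2 * genusOneQuartic k t m := by
    rw [← hy, ← weierstrassCubic_rescale, ← hx]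
    exact hW
  exact mul_left_cancel₀ (pow_ne_zero 2 hd) (by linear_combination hscaled)

theorem stmt_14 (F : Type*) [Field F] (k t x y : F)
    (h : (k + 4) * (t + k + 3) ≠ 0)
    (hW : y ^ 2 = x ^ 3 + ((k ^ 2 - 24) * t ^ 2 + 2 * (k - 2) * (k + 4) ^ 2 * t
      + k * (k + 4) ^ 3) * x ^ 2 - 16 * t ^ 4 * (t + k + 3) * x) :
    let m := x / (4 * (k + 4) ^ 2 * (t + k + 3))
    let W := y / (4 * (t + k + 3) * (k + 4))
    W ^ 2 = -4 * t ^ 4 * m + (k ^ 2 - 24) * (k + 4) ^ 2 * m ^ 2 * t ^ 2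
      + (4 * m + 2 * (k - 2)) * (k + 4) ^ 4 * m ^ 2 * t
      + (4 * (k + 3) * m + k * (k + 4)) * (k + 4) ^ 4 * m ^ 2 :=
  stmt_14_general F k t x y hW
end

section
/- Let F = ℚ(i)(t) be the field of rational functions in t over the Gaussian field ℚ(i). The pair (x₀, y₀) = (16(t−3), 4i(t−3)(t²−24)) is an affine point of the elliptic curve over F with Weierstrass equation y² = x³ + (3t² − 16t + 12)x² − t⁴(t−3)x; that is, (4i(t−3)(t²−24))² = (16(t−3))³ + (3t²−16t+12)(16(t−3))² − t⁴(t−3)·16(t−3) holds in F. (This point generates the Mordell–Weil group of the rank 1 elliptic fibration (F₋₆) of the K3 surface Z₋₆.) -/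
open IntermediateField

theorem IntermediateField.AdjoinSimple.gen_sq_eq_neg_one {F E : Type*} [Field F] [Field E]
    [Algebra F E] {α : E} (hα : α ^ 2 = -1) : AdjoinSimple.gen F α ^ 2 = -1 :=
  (algebraMap F⟮α⟯ E).injective <| by
    rw [map_pow, AdjoinSimple.algebraMap_gen, hα, map_neg, map_one]

/-- The right-hand side factors as `-(4 (t - 3) (t ^ 2 - 24)) ^ 2`. -/
theorem point_on_fibration_neg_six {R : Type*} [CommRing R] {i : R} (hi : i ^ 2 = -1) (t : R) :
    (4 * i * (t - 3) * (t ^ 2 - 24)) ^ 2 =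
      (16 * (t - 3)) ^ 3 + (3 * t ^ 2 - 16 * t + 12) * (16 * (t - 3)) ^ 2 -
        t ^ 4 * (t - 3) * (16 * (t - 3)) := by
  linear_combination (16 * (t - 3) ^ 2 * (t ^ 2 - 24) ^ 2) * hi

open IntermediateField in
theorem stmt_16 :
    let K : IntermediateField ℚ ℂ := ℚ⟮Complex.I⟯
    let i : RatFunc K := RatFunc.C (IntermediateField.AdjoinSimple.gen ℚ Complex.I)
    let t : RatFunc K := RatFunc.X
    let x₀ : RatFunc K := 16 * (t - 3)
    let y₀ : RatFunc K := 4 * i * (t - 3) * (t ^ 2 - 24)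
    y₀ ^ 2 = x₀ ^ 3 + (3 * t ^ 2 - 16 * t + 12) * x₀ ^ 2 - t ^ 4 * (t - 3) * x₀ := by
  intro K i t x₀ y₀
  have hi : i ^ 2 = -1 := by
    rw [← map_pow, AdjoinSimple.gen_sq_eq_neg_one Complex.I_sq, map_neg, map_one]
  exact point_on_fibration_neg_six hi t
end

section
/- Let F = ℚ(√−3)(t) be the field of rational functions in t over ℚ(√−3). The pair (x₀, y₀) with x₀ = −t⁴(t+72)²/(1728(t−24)²) and y₀ = √−3·t⁴(t+72)(t⁴ + 144t³ − 20736t² + 138240t + 995328)/(124416(t−24)³) is an affine point of the elliptic curve over F with Weierstrass equation y² = x³ + (30t² − 448t + 1536)x² − t⁴(t−9)x. (This point is of infinite order and generates the Mordell–Weil group of the rank 1 elliptic fibration (F₋₁₂) of the K3 surface Z₋₁₂.) -/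
/-!
Only `√−3 ^ 2 = −3` matters: once `y₀²` is rewritten with it, clearing the denominators
`1728 (t − 24)²` and `124416 (t − 24)³` turns the curve equation into a polynomial identity
in `t` over `ℚ`. Hence it holds at every `t ≠ 24` of any field of characteristic zero, in
particular at the generic point `t = X` of `ℚ(√−3)(t)`.
-/

theorem generator_on_curve_of_sq_eq_neg_three {F : Type*} [Field F] [CharZero F] {d t : F}
    (hd : d ^ 2 = -3) (ht : t ≠ 24) :
    (d * t ^ 4 * (t + 72) * (t ^ 4 + 144 * t ^ 3 - 20736 * t ^ 2 + 138240 * t + 995328)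
        / (124416 * (t - 24) ^ 3)) ^ 2
      = (-(t ^ 4 * (t + 72) ^ 2) / (1728 * (t - 24) ^ 2)) ^ 3
        + (30 * t ^ 2 - 448 * t + 1536) * (-(t ^ 4 * (t + 72) ^ 2) / (1728 * (t - 24) ^ 2)) ^ 2
        - t ^ 4 * (t - 9) * (-(t ^ 4 * (t + 72) ^ 2) / (1728 * (t - 24) ^ 2)) := by
  have ht' : t - 24 ≠ 0 := sub_ne_zero.mpr ht
  rw [mul_assoc d, mul_assoc d, mul_div_assoc, mul_pow, hd]
  field_simp
  ring

theorem RatFunc.X_ne_ofNat {K : Type*} [Field K] (n : ℕ) [n.AtLeastTwo] :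
    (RatFunc.X : RatFunc K) ≠ OfNat.ofNat n := by
  rw [← RatFunc.algebraMap_X, ← map_ofNat (algebraMap (Polynomial K) (RatFunc K)), Ne,
    (IsFractionRing.injective (Polynomial K) (RatFunc K)).eq_iff, ← Polynomial.C_ofNat]
  exact Polynomial.X_ne_C _

theorem ofReal_sqrt_three_mul_I_sq : (Real.sqrt 3 * Complex.I : ℂ) ^ 2 = -3 := by
  rw [mul_pow, Complex.I_sq, ← Complex.ofReal_pow, Real.sq_sqrt (by norm_num)]
  norm_num

open IntermediateField in
theorem stmt_18 :
    let s : ℂ := Real.sqrt 3 * Complex.I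
    let K : IntermediateField ℚ ℂ := ℚ⟮s⟯
    let sqrtm3 : RatFunc K := RatFunc.C (IntermediateField.AdjoinSimple.gen ℚ s)
    let t : RatFunc K := RatFunc.X
    let x₀ : RatFunc K := -(t ^ 4 * (t + 72) ^ 2) / (1728 * (t - 24) ^ 2)
    let y₀ : RatFunc K := sqrtm3 * t ^ 4 * (t + 72)
        * (t ^ 4 + 144 * t ^ 3 - 20736 * t ^ 2 + 138240 * t + 995328)
        / (124416 * (t - 24) ^ 3)
    y₀ ^ 2 = x₀ ^ 3 + (30 * t ^ 2 - 448 * t + 1536) * x₀ ^ 2 - t ^ 4 * (t - 9) * x₀ := by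
  intro s K sqrtm3 t x₀ y₀
  have hgen : AdjoinSimple.gen ℚ s ^ 2 = -3 :=
    Subtype.ext (by push_cast; exact ofReal_sqrt_three_mul_I_sq)
  have hsqrtm3 : sqrtm3 ^ 2 = -3 := by
    rw [← map_pow, hgen, map_neg, map_ofNat]
  exact generator_on_curve_of_sq_eq_neg_three hsqrtm3 (RatFunc.X_ne_ofNat 24)
end

section
/- Let M be the integer matrix [[8,4],[4,8]], regarded as the Gram matrix of a symmetric bilinear form B(u,v) = uᵀMv on ℚ². Let L = ℤ² ⊂ ℚ² and let L* = {x ∈ ℚ² : B(x,e) ∈ ℤ for all e ∈ ℤ²} be the dual lattice. Then the quotient group L*/L is isomorphic to ℤ/4ℤ × ℤ/12ℤ; moreover there exist b, c ∈ L* whose classes generate the factors ℤ/4ℤ and ℤ/12ℤ respectively and satisfy B(b,b) ≡ 1/2 (mod 2ℤ), B(c,c) ≡ 7/6 (mod 2ℤ) and B(b,c) ≡ −1/4 (mod ℤ). (This is the discriminant form computation showing that the transcendental lattice of the singular K3 surface Z₋₆ is [8 4 8].) -/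
/-! The dual lattice `L* = M⁻¹ℤ²` is free on `b = (1/4, 0)` and `c = (5/12, -1/12)`: every
`x ∈ L*` equals `(4x₀ + 20x₁) • b - 12x₁ • c`, with integral coefficients since `Mx ∈ ℤ²`. In this
basis `L = 4ℤ b ⊕ 12ℤ c` (the Smith normal form of `M` is `diag(4, 12)`), so `L*/L ≅ ℤ/4 × ℤ/12`
with `b`, `c` mapping to the standard generators; the values of the form on `b`, `c` are then a
direct computation. -/

/-- The symmetric bilinear form on `ℚ²` with Gram matrix `[[8,4],[4,8]]`. -/
def B19 (u v : Fin 2 → ℚ) : ℚ :=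
  8 * u 0 * v 0 + 4 * u 0 * v 1 + 4 * u 1 * v 0 + 8 * u 1 * v 1

/-- The lattice `L = ℤ² ⊂ ℚ²`. -/
def L19 : Submodule ℤ (Fin 2 → ℚ) where
  carrier := {x | ∀ i, ∃ n : ℤ, x i = (n : ℚ)}
  add_mem' := by
    intro x y hx hy i
    obtain ⟨a, ha⟩ := hx i
    obtain ⟨b, hb⟩ := hy i
    refine ⟨a + b, ?_⟩
    have : (x + y) i = x i + y i := rfl
    rw [this, ha, hb]
    push_cast
    ring
  zero_mem' := by
    intro i
    exact ⟨0, by simp⟩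
  smul_mem' := by
    intro c x hx i
    obtain ⟨a, ha⟩ := hx i
    refine ⟨c * a, ?_⟩
    have : (c • x) i = (c : ℚ) * x i := by
      simp [Pi.smul_apply, zsmul_eq_mul]
    rw [this, ha]
    push_cast
    ring

/-- The dual lattice `L* = {x ∈ ℚ² : B(x,e) ∈ ℤ for all e ∈ ℤ²}`. -/
def Lstar19 : Submodule ℤ (Fin 2 → ℚ) where
  carrier := {x | ∀ e : Fin 2 → ℤ, ∃ n : ℤ, B19 x (fun i => (e i : ℚ)) = (n : ℚ)}
  add_mem' := by
    intro x y hx hy e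
    obtain ⟨a, ha⟩ := hx e
    obtain ⟨b, hb⟩ := hy e
    refine ⟨a + b, ?_⟩
    have h : B19 (x + y) (fun i => (e i : ℚ))
        = B19 x (fun i => (e i : ℚ)) + B19 y (fun i => (e i : ℚ)) := by
      show B19 (x + y) _ = _
      unfold B19
      have hx0 : (x + y) 0 = x 0 + y 0 := rfl
      have hx1 : (x + y) 1 = x 1 + y 1 := rfl
      rw [hx0, hx1]
      ring
    rw [h, ha, hb]
    push_cast
    ring
  zero_mem' := by
    intro e
    refine ⟨0, ?_⟩
    unfold B19
    norm_num
  smul_mem' := by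
    intro c x hx e
    obtain ⟨a, ha⟩ := hx e
    refine ⟨c * a, ?_⟩
    have h : B19 (c • x) (fun i => (e i : ℚ)) = (c : ℚ) * B19 x (fun i => (e i : ℚ)) := by
      unfold B19
      have hx0 : (c • x) 0 = (c : ℚ) * x 0 := by simp [Pi.smul_apply, zsmul_eq_mul]
      have hx1 : (c • x) 1 = (c : ℚ) * x 1 := by simp [Pi.smul_apply, zsmul_eq_mul]
      rw [hx0, hx1]
      ring
    rw [h, ha]
    push_cast
    ring

section ZModProdLift

variable {A : Type*} [AddCommGroup A] {m n : ℕ} {a b : A}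

def ZMod.prodLift (ha : (m : ℤ) • a = 0) (hb : (n : ℤ) • b = 0) : ZMod m × ZMod n →+ A :=
  (ZMod.lift m ⟨zmultiplesHom A a, ha⟩).coprod (ZMod.lift n ⟨zmultiplesHom A b, hb⟩)

@[simp]
theorem ZMod.prodLift_intCast (ha : (m : ℤ) • a = 0) (hb : (n : ℤ) • b = 0) (s t : ℤ) :
    ZMod.prodLift ha hb ((s : ZMod m), (t : ZMod n)) = s • a + t • b := by
  simp [ZMod.prodLift, ZMod.lift_coe]

theorem ZMod.prodLift_bijective (ha : (m : ℤ) • a = 0) (hb : (n : ℤ) • b = 0)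
    (hspan : ∀ x : A, ∃ s t : ℤ, s • a + t • b = x)
    (hrel : ∀ s t : ℤ, s • a + t • b = 0 → (m : ℤ) ∣ s ∧ (n : ℤ) ∣ t) :
    Function.Bijective (ZMod.prodLift ha hb) := by
  constructor
  · rw [injective_iff_map_eq_zero]
    rintro ⟨s, t⟩ h
    obtain ⟨s, rfl⟩ := ZMod.intCast_surjective s
    obtain ⟨t, rfl⟩ := ZMod.intCast_surjective t
    obtain ⟨hs, ht⟩ := hrel s t (by simpa using h)
    simp [(ZMod.intCast_zmod_eq_zero_iff_dvd s m).mpr hs,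
      (ZMod.intCast_zmod_eq_zero_iff_dvd t n).mpr ht]
  · intro x
    obtain ⟨s, t, rfl⟩ := hspan x
    exact ⟨(s, t), ZMod.prodLift_intCast ha hb s t⟩

theorem ZMod.exists_addEquiv_prod_of_presentation (ha : (m : ℤ) • a = 0) (hb : (n : ℤ) • b = 0)
    (hspan : ∀ x : A, ∃ s t : ℤ, s • a + t • b = x)
    (hrel : ∀ s t : ℤ, s • a + t • b = 0 → (m : ℤ) ∣ s ∧ (n : ℤ) ∣ t) :
    ∃ φ : A ≃+ ZMod m × ZMod n, φ a = (1, 0) ∧ φ b = (0, 1) := by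
  refine ⟨(AddEquiv.ofBijective _ (ZMod.prodLift_bijective ha hb hspan hrel)).symm, ?_, ?_⟩ <;>
    rw [AddEquiv.symm_apply_eq]
  · simpa using (ZMod.prodLift_intCast ha hb 1 0).symm
  · simpa using (ZMod.prodLift_intCast ha hb 0 1).symm

end ZModProdLift

theorem mem_Lstar19_iff {x : Fin 2 → ℚ} :
    x ∈ Lstar19 ↔ (∃ m : ℤ, 8 * x 0 + 4 * x 1 = m) ∧ ∃ n : ℤ, 4 * x 0 + 8 * x 1 = n := by
  have hB (e : Fin 2 → ℤ) :
      B19 x (fun i => (e i : ℚ)) = e 0 * (8 * x 0 + 4 * x 1) + e 1 * (4 * x 0 + 8 * x 1) := by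
    simp only [B19]; ring
  constructor
  · intro hx
    obtain ⟨m, hm⟩ := hx ![1, 0]
    obtain ⟨n, hn⟩ := hx ![0, 1]
    rw [hB] at hm hn
    exact ⟨⟨m, by simpa using hm⟩, ⟨n, by simpa using hn⟩⟩
  · rintro ⟨⟨m, hm⟩, ⟨n, hn⟩⟩ e
    exact ⟨e 0 * m + e 1 * n, by rw [hB, hm, hn]; push_cast; ring⟩

theorem mem_L19_iff {x : Fin 2 → ℚ} : x ∈ L19 ↔ (∃ k : ℤ, x 0 = k) ∧ ∃ l : ℤ, x 1 = l :=
  Fin.forall_fin_two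

def b19 : Lstar19 :=
  ⟨![1 / 4, 0], mem_Lstar19_iff.mpr ⟨⟨2, by norm_num⟩, ⟨1, by norm_num⟩⟩⟩

def c19 : Lstar19 :=
  ⟨![5 / 12, -1 / 12], mem_Lstar19_iff.mpr ⟨⟨3, by norm_num⟩, ⟨1, by norm_num⟩⟩⟩

theorem coe_zsmul_b19_add_zsmul_c19 (s t : ℤ) :
    ((s • b19 + t • c19 : Lstar19) : Fin 2 → ℚ) = ![(s : ℚ) / 4 + 5 * t / 12, -t / 12] := by
  ext i
  fin_cases i <;> simp [b19, c19] <;> ring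

theorem exists_zsmul_b19_add_zsmul_c19 (x : Lstar19) : ∃ s t : ℤ, s • b19 + t • c19 = x := by
  obtain ⟨⟨m, hm⟩, ⟨n, hn⟩⟩ := mem_Lstar19_iff.mp x.2
  refine ⟨3 * n - m, m - 2 * n, Subtype.ext ?_⟩
  rw [coe_zsmul_b19_add_zsmul_c19]
  ext i
  fin_cases i <;> simp <;> linarith

theorem coe_zsmul_b19_add_zsmul_c19_mem_L19_iff (s t : ℤ) :
    ((s • b19 + t • c19 : Lstar19) : Fin 2 → ℚ) ∈ L19 ↔ 4 ∣ s ∧ 12 ∣ t := by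
  rw [coe_zsmul_b19_add_zsmul_c19, mem_L19_iff]
  simp only [Matrix.cons_val_zero, Matrix.cons_val_one]
  constructor
  · rintro ⟨⟨k, hk⟩, ⟨l, hl⟩⟩
    have ht : t = 12 * -l := by qify; linarith
    subst ht
    exact ⟨⟨k + 5 * l, by qify; linarith⟩, ⟨-l, rfl⟩⟩
  · rintro ⟨⟨k, rfl⟩, ⟨l, rfl⟩⟩
    exact ⟨⟨k + 5 * l, by push_cast; ring⟩, ⟨-l, by push_cast; ring⟩⟩

abbrev DiscriminantGroup19 : Type := Lstar19 ⧸ Submodule.comap Lstar19.subtype L19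

theorem mk_zsmul_b19_add_zsmul_c19_eq_zero_iff (s t : ℤ) :
    (Submodule.Quotient.mk (s • b19 + t • c19) : DiscriminantGroup19) = 0 ↔ 4 ∣ s ∧ 12 ∣ t := by
  rw [Submodule.Quotient.mk_eq_zero, Submodule.mem_comap, Submodule.subtype_apply,
    coe_zsmul_b19_add_zsmul_c19_mem_L19_iff]

theorem exists_addEquiv_discriminantGroup19 :
    ∃ φ : DiscriminantGroup19 ≃+ ZMod 4 × ZMod 12,
      φ (Submodule.Quotient.mk b19) = (1, 0) ∧ φ (Submodule.Quotient.mk c19) = (0, 1) := by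
  refine ZMod.exists_addEquiv_prod_of_presentation ?_ ?_ ?_ ?_
  · simpa using (mk_zsmul_b19_add_zsmul_c19_eq_zero_iff 4 0).mpr (by norm_num)
  · simpa using (mk_zsmul_b19_add_zsmul_c19_eq_zero_iff 0 12).mpr (by norm_num)
  · rintro ⟨x⟩
    obtain ⟨s, t, rfl⟩ := exists_zsmul_b19_add_zsmul_c19 x
    exact ⟨s, t, rfl⟩
  · exact fun s t => (mk_zsmul_b19_add_zsmul_c19_eq_zero_iff s t).mp

/-- The discriminant group `L*/L` of the lattice with Gram matrix `[[8,4],[4,8]]` is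
`ℤ/4ℤ × ℤ/12ℤ`, with generators `b`, `c` of the two factors satisfying
`B(b,b) ≡ 1/2 (mod 2ℤ)`, `B(c,c) ≡ 7/6 (mod 2ℤ)` and `B(b,c) ≡ -1/4 (mod ℤ)`. -/
theorem stmt_19 :
    ∃ (φ : (Lstar19 ⧸ (Submodule.comap Lstar19.subtype L19)) ≃+ (ZMod 4 × ZMod 12))
      (b c : Lstar19),
      φ (Submodule.Quotient.mk b) = (1, 0) ∧
      φ (Submodule.Quotient.mk c) = (0, 1) ∧
      (∃ n : ℤ, B19 (b : Fin 2 → ℚ) (b : Fin 2 → ℚ) - 1 / 2 = 2 * (n : ℚ)) ∧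
      (∃ n : ℤ, B19 (c : Fin 2 → ℚ) (c : Fin 2 → ℚ) - 7 / 6 = 2 * (n : ℚ)) ∧
      (∃ n : ℤ, B19 (b : Fin 2 → ℚ) (c : Fin 2 → ℚ) + 1 / 4 = (n : ℚ)) := by
  obtain ⟨φ, hb, hc⟩ := exists_addEquiv_discriminantGroup19
  refine ⟨φ, b19, c19, hb, hc, ⟨0, ?_⟩, ⟨0, ?_⟩, ⟨1, ?_⟩⟩ <;> norm_num [B19, b19, c19]
end
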